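/- arXiv:1501.00639 — 4 statements merged into one kernel-verified Lean document; each statement's English description precedes it below -/
import Mathlib

section
/- Let f : X → ℝ be a nonnegative measurable function with ∫ f² dμ < ∞, and define f_k = min{ max(f − 2^k, 0), 2^k } for k ∈ ℤ. Then ∑_{k ∈ ℤ} ∫ f_k² dμ ≤ (1/2) ∫ f² dμ. -/
open MeasureTheory

/-!
Pointwise, if `2^K ≤ t < 2^(K+1)` then `f_k(t)` is `2^k` for `k < K`, at most `t - 2^K` for
`k = K`, and `0` for `k > K`. The geometric series gives `∑_k f_k(t)² ≤ (t - 2^K)² + 4^K/3`,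
and this quadratic in `t` is at most `t²/2` on `[2^K, 2^(K+1)]`. Integrating gives the claim.
-/

noncomputable def dyadicTrunc (k : ℤ) (t : ℝ) : ℝ := min (max (t - 2 ^ k) 0) (2 ^ k)

@[fun_prop]
lemma continuous_dyadicTrunc (k : ℤ) : Continuous (dyadicTrunc k) := by
  unfold dyadicTrunc
  fun_prop

lemma dyadicTrunc_nonneg (k : ℤ) (t : ℝ) : 0 ≤ dyadicTrunc k t :=
  le_min (le_max_right _ _) (by positivity)

lemma dyadicTrunc_le_two_zpow (k : ℤ) (t : ℝ) : dyadicTrunc k t ≤ 2 ^ k :=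
  min_le_right _ _

lemma dyadicTrunc_le_sub {k : ℤ} {t : ℝ} (h : 2 ^ k ≤ t) : dyadicTrunc k t ≤ t - 2 ^ k :=
  (min_le_left _ _).trans (max_eq_left (sub_nonneg.2 h)).le

lemma dyadicTrunc_eq_zero {k : ℤ} {t : ℝ} (h : t ≤ 2 ^ k) : dyadicTrunc k t = 0 := by
  rw [dyadicTrunc, max_eq_right (sub_nonpos.2 h), min_eq_left (by positivity)]

lemma tsum_ite_lt_two_zpow_sq (K : ℤ) :
    ∑' k : ℤ, (if k < K then ENNReal.ofReal (((2 : ℝ) ^ k) ^ 2) else 0)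
      = ENNReal.ofReal (((2 : ℝ) ^ K) ^ 2 / 3) := by
  have hinj : Function.Injective (fun n : ℕ => K - 1 - n) := fun m n h => by simpa using h
  have hsupp : Function.support
      (fun k : ℤ => if k < K then ENNReal.ofReal (((2 : ℝ) ^ k) ^ 2) else 0)
        ⊆ Set.range (fun n : ℕ => K - 1 - n) := by
    intro k hk
    have : k < K := by by_contra h; simp [h] at hk
    exact ⟨(K - 1 - k).toNat, by simp only; omega⟩
  rw [← hinj.tsum_eq hsupp]
  have hterm (n : ℕ) :
      (if K - 1 - (n : ℤ) < K then ENNReal.ofReal (((2 : ℝ) ^ (K - 1 - (n : ℤ))) ^ 2) else 0)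
        = ENNReal.ofReal (((2 : ℝ) ^ K) ^ 2 / 4) * ENNReal.ofReal (1 / 4) ^ n := by
    rw [if_pos (by omega), ← ENNReal.ofReal_pow (by norm_num),
      ← ENNReal.ofReal_mul (by positivity),
      show K - 1 - (n : ℤ) = K - (n + 1 : ℕ) by push_cast; ring, zpow_sub₀ two_ne_zero,
      zpow_natCast]
    congr 1
    rw [one_div, inv_pow,
      show (4 : ℝ) ^ n = ((2 : ℝ) ^ n) ^ 2 by rw [← pow_mul, mul_comm, pow_mul]; norm_num]
    field_simp
    ring
  simp only [hterm]
  rw [ENNReal.tsum_mul_left, ENNReal.tsum_geometric, ← ENNReal.ofReal_one,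
    ← ENNReal.ofReal_sub _ (by norm_num), ← ENNReal.ofReal_inv_of_pos (by norm_num),
    ← ENNReal.ofReal_mul (by positivity)]
  congr 1
  ring

lemma sub_sq_add_sq_div_three_le {a t : ℝ} (hat : a ≤ t) (hta : t ≤ 2 * a) :
    (t - a) ^ 2 + a ^ 2 / 3 ≤ t ^ 2 / 2 := by
  nlinarith [mul_nonneg (sub_nonneg.2 hat) (sub_nonneg.2 hta)]

lemma ofReal_dyadicTrunc_sq_le {K : ℤ} {t : ℝ} (hK : 2 ^ K ≤ t) (hK' : t < 2 ^ (K + 1))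
    (k : ℤ) :
    ENNReal.ofReal (dyadicTrunc k t ^ 2)
      ≤ (if k = K then ENNReal.ofReal ((t - 2 ^ K) ^ 2) else 0)
        + (if k < K then ENNReal.ofReal (((2 : ℝ) ^ k) ^ 2) else 0) := by
  rcases lt_trichotomy k K with hk | rfl | hk
  · rw [if_neg hk.ne, if_pos hk, zero_add]
    exact ENNReal.ofReal_le_ofReal <|
      pow_le_pow_left₀ (dyadicTrunc_nonneg k t) (dyadicTrunc_le_two_zpow k t) 2
  · rw [if_pos rfl, if_neg (lt_irrefl k), add_zero]
    exact ENNReal.ofReal_le_ofReal <|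
      pow_le_pow_left₀ (dyadicTrunc_nonneg k t) (dyadicTrunc_le_sub hK) 2
  · rw [dyadicTrunc_eq_zero (hK'.le.trans (zpow_le_zpow_right₀ one_le_two hk))]
    simp

lemma tsum_ofReal_dyadicTrunc_sq_le (t : ℝ) :
    ∑' k : ℤ, ENNReal.ofReal (dyadicTrunc k t ^ 2) ≤ 1 / 2 * ENNReal.ofReal (t ^ 2) := by
  rcases le_or_gt t 0 with ht | ht
  · simp [dyadicTrunc_eq_zero (ht.trans (zpow_pos two_pos _).le)]
  set K := Int.log 2 t
  have hK : (2 : ℝ) ^ K ≤ t := Int.zpow_log_le_self one_lt_two ht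
  have hK' : t < (2 : ℝ) ^ (K + 1) := Int.lt_zpow_succ_log_self one_lt_two t
  have h2K : t ≤ 2 * 2 ^ K := by rw [zpow_add_one₀ two_ne_zero] at hK'; linarith
  calc ∑' k : ℤ, ENNReal.ofReal (dyadicTrunc k t ^ 2)
      ≤ ∑' k : ℤ, ((if k = K then ENNReal.ofReal ((t - 2 ^ K) ^ 2) else 0)
          + (if k < K then ENNReal.ofReal (((2 : ℝ) ^ k) ^ 2) else 0)) :=
        ENNReal.tsum_le_tsum (ofReal_dyadicTrunc_sq_le hK hK')
    _ = ENNReal.ofReal ((t - 2 ^ K) ^ 2 + ((2 : ℝ) ^ K) ^ 2 / 3) := by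
        rw [ENNReal.tsum_add, tsum_ite_eq, tsum_ite_lt_two_zpow_sq,
          ENNReal.ofReal_add (by positivity) (by positivity)]
    _ ≤ ENNReal.ofReal (t ^ 2 / 2) :=
        ENNReal.ofReal_le_ofReal (sub_sq_add_sq_div_three_le hK h2K)
    _ = 1 / 2 * ENNReal.ofReal (t ^ 2) := by
        rw [ENNReal.ofReal_div_of_pos two_pos, ENNReal.ofReal_ofNat, ENNReal.div_eq_inv_mul,
          one_div]

theorem tsum_sq_truncation_le_half_general {X : Type*} [MeasurableSpace X] (μ : Measure X)
    (f : X → ℝ) (hf : Measurable f) :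
    ∑' k : ℤ, ∫⁻ x,
        ENNReal.ofReal ((min (max (f x - (2 : ℝ) ^ (k : ℝ)) 0) ((2 : ℝ) ^ (k : ℝ))) ^ 2) ∂μ
      ≤ (1 / 2) * ∫⁻ x, ENNReal.ofReal (f x ^ 2) ∂μ := by
  simp only [Real.rpow_intCast]
  calc ∑' k : ℤ, ∫⁻ x, ENNReal.ofReal (dyadicTrunc k (f x) ^ 2) ∂μ
      = ∫⁻ x, ∑' k : ℤ, ENNReal.ofReal (dyadicTrunc k (f x) ^ 2) ∂μ :=
        (lintegral_tsum fun k => by fun_prop).symm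
    _ ≤ ∫⁻ x, 1 / 2 * ENNReal.ofReal (f x ^ 2) ∂μ :=
        lintegral_mono fun x => tsum_ofReal_dyadicTrunc_sq_le (f x)
    _ = 1 / 2 * ∫⁻ x, ENNReal.ofReal (f x ^ 2) ∂μ :=
        lintegral_const_mul' _ _ (by simp)

/-- Layer-cake estimate: for the dyadic truncations `f_k = min (max (f − 2^k) 0) (2^k)` of a
nonnegative measurable function with `∫ f² dμ < ∞`,
`∑_{k ∈ ℤ} ∫ f_k² dμ ≤ (1/2) ∫ f² dμ`. -/
theorem tsum_sq_truncation_le_half {X : Type*} [MeasurableSpace X] (μ : Measure X)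
    (f : X → ℝ) (hf : Measurable f) (hf0 : ∀ x, 0 ≤ f x)
    (hfin : ∫⁻ x, ENNReal.ofReal (f x ^ 2) ∂μ < ⊤) :
    ∑' k : ℤ, ∫⁻ x,
        ENNReal.ofReal ((min (max (f x - (2 : ℝ) ^ (k : ℝ)) 0) ((2 : ℝ) ^ (k : ℝ))) ^ 2) ∂μ
      ≤ (1 / 2) * ∫⁻ x, ENNReal.ofReal (f x ^ 2) ∂μ :=
  tsum_sq_truncation_le_half_general μ f hf
end

section
/- Let (X, μ) be a measure space, S : X → ℝ measurable with (A/4)S + B ≥ 0 pointwise for constants A > 0, B ≥ 0, and f ∈ W^{1,2} nonnegative. Define W(h)² = A ∫ (|∇h|² + (1/4) S h²) dμ + B ∫ h² dμ and f_k = min{ max(f − 2^k, 0), 2^k }. Then ∑_{k ∈ ℤ} W(f_k)² ≤ W(f)². -/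
open MeasureTheory



lemma tsum_trunc_le (v : ℝ) (hv : 0 ≤ v) :
    ∑' k : ℤ, ENNReal.ofReal (min (max (v - (2:ℝ) ^ (k:ℝ)) 0) ((2:ℝ) ^ (k:ℝ))) ≤ ENNReal.ofReal v := by
  set s : ℤ → Set ℝ := fun k => Set.Ioc ((2:ℝ) ^ (k:ℝ)) (min (2 * (2:ℝ) ^ (k:ℝ)) v) with hs
  have hpow : ∀ k : ℤ, (0:ℝ) < (2:ℝ) ^ (k:ℝ) := fun k => Real.rpow_pos_of_pos (by norm_num) _
  have hvol : ∀ k : ℤ, ENNReal.ofReal (min (max (v - (2:ℝ) ^ (k:ℝ)) 0) ((2:ℝ) ^ (k:ℝ))) = volume (s k) := by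
    intro k
    set c := (2:ℝ) ^ (k:ℝ)
    rw [hs]
    rw [Real.volume_Ioc]
    have h1 : min (2*c) v - c = min c (v - c) := by
      rw [(min_sub_sub_right (2*c) v c).symm]
      ring_nf
    rcases le_total (v - c) 0 with h | h
    · have h2 : min (max (v - c) 0) c = 0 := by
        rw [max_eq_right h, min_eq_left (hpow k).le]
      rw [h2, ENNReal.ofReal_zero, ENNReal.ofReal_of_nonpos]
      rw [h1]
      exact le_trans (min_le_right _ _) h
    · congr 1
      rw [h1, max_eq_left h, min_comm]
  have key : ∀ k k' : ℤ, k < k' → Disjoint (s k) (s k') := by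
    intro k k' hlt
    rw [Set.disjoint_left]
    rintro y ⟨_, hy2⟩ ⟨hy3, _⟩
    have h2 : 2 * (2:ℝ) ^ (k:ℝ) ≤ (2:ℝ) ^ (k':ℝ) := by
      have h4 : 2 * (2:ℝ) ^ (k:ℝ) = (2:ℝ) ^ ((k:ℝ) + 1) := by
        rw [Real.rpow_add (by norm_num), Real.rpow_one]; ring
      rw [h4]
      apply Real.rpow_le_rpow_of_exponent_le (by norm_num)
      have h5 : (k:ℤ) + 1 ≤ k' := hlt
      exact_mod_cast h5
    have h6 : y ≤ (2:ℝ) ^ (k':ℝ) := hy2.trans ((min_le_left _ _).trans h2)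
    linarith
  have hdisj : Pairwise (Function.onFun Disjoint s) := by
    intro k k' hkk'
    rcases hkk'.lt_or_gt with h | h
    · exact key _ _ h
    · exact (key _ _ h).symm
  calc ∑' k : ℤ, ENNReal.ofReal (min (max (v - (2:ℝ) ^ (k:ℝ)) 0) ((2:ℝ) ^ (k:ℝ)))
      = ∑' k : ℤ, volume (s k) := tsum_congr hvol
    _ = volume (⋃ k, s k) := (measure_iUnion hdisj (fun k => measurableSet_Ioc)).symm
    _ ≤ volume (Set.Ioc 0 v) := by
        apply measure_mono
        intro y hy
        rw [Set.mem_iUnion] at hy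
        obtain ⟨k, hk1, hk2⟩ := hy
        exact ⟨(hpow k).trans hk1, hk2.trans (min_le_right _ _)⟩
    _ = ENNReal.ofReal v := by rw [Real.volume_Ioc, sub_zero]

lemma tsum_trunc_sq_le (v : ℝ) (hv : 0 ≤ v) :
    ∑' k : ℤ, ENNReal.ofReal ((min (max (v - (2:ℝ) ^ (k:ℝ)) 0) ((2:ℝ) ^ (k:ℝ)))^2)
      ≤ ENNReal.ofReal (v^2) := by
  have hnn : ∀ k : ℤ, 0 ≤ min (max (v - (2:ℝ) ^ (k:ℝ)) 0) ((2:ℝ) ^ (k:ℝ)) := fun k =>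
    le_min (le_max_right _ _) (Real.rpow_pos_of_pos (by norm_num) _).le
  set a : ℤ → ENNReal := fun k => ENNReal.ofReal (min (max (v - (2:ℝ) ^ (k:ℝ)) 0) ((2:ℝ) ^ (k:ℝ))) with ha
  have h1 : ∀ k : ℤ, ENNReal.ofReal ((min (max (v - (2:ℝ) ^ (k:ℝ)) 0) ((2:ℝ) ^ (k:ℝ)))^2) = a k * a k := by
    intro k; rw [ha, ← ENNReal.ofReal_mul (hnn k), sq]
  calc ∑' k : ℤ, ENNReal.ofReal ((min (max (v - (2:ℝ) ^ (k:ℝ)) 0) ((2:ℝ) ^ (k:ℝ)))^2)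
      = ∑' k : ℤ, a k * a k := tsum_congr h1
    _ ≤ ∑' k : ℤ, a k * ENNReal.ofReal v := by
        apply ENNReal.tsum_le_tsum
        intro k
        exact mul_le_mul_right (le_trans (ENNReal.le_tsum k) (tsum_trunc_le v hv)) _
    _ = (∑' k : ℤ, a k) * ENNReal.ofReal v := ENNReal.tsum_mul_right
    _ ≤ ENNReal.ofReal v * ENNReal.ofReal v := mul_le_mul_left (tsum_trunc_le v hv) _
    _ = ENNReal.ofReal (v^2) := by rw [← ENNReal.ofReal_mul hv, sq]



lemma grad_pointwise {n : ℕ} (f : EuclideanSpace ℝ (Fin n) → ℝ) (L : NNReal)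
    (hf : LipschitzWith L f) (hf0 : ∀ x, 0 ≤ f x) (x : EuclideanSpace ℝ (Fin n)) :
    ∑' k : ℤ, ENNReal.ofReal
        (‖fderiv ℝ (fun y => min (max (f y - (2:ℝ) ^ (k:ℝ)) 0) ((2:ℝ) ^ (k:ℝ))) x‖ ^ 2)
      ≤ ENNReal.ofReal (‖fderiv ℝ f x‖ ^ 2) := by
  have hcont : Continuous f := hf.continuous
  have hpow : ∀ k : ℤ, (0:ℝ) < (2:ℝ) ^ (k:ℝ) := fun k => Real.rpow_pos_of_pos (by norm_num) _
  set φ : ℤ → EuclideanSpace ℝ (Fin n) → ℝ :=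
    fun k y => min (max (f y - (2:ℝ) ^ (k:ℝ)) 0) ((2:ℝ) ^ (k:ℝ)) with hφ
  have hzero : ∀ k : ℤ, ¬((2:ℝ) ^ (k:ℝ) < f x ∧ f x < 2 * (2:ℝ) ^ (k:ℝ)) →
      fderiv ℝ (φ k) x = 0 := by
    intro k hk
    rcases lt_trichotomy (f x) ((2:ℝ) ^ (k:ℝ)) with h | h | h
    · have hev : φ k =ᶠ[nhds x] fun _ => (0:ℝ) := by
        filter_upwards [(hcont.continuousAt (x := x)).eventually_lt continuousAt_const h] with y hy
        simp only [hφ]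
        rw [max_eq_right (by linarith), min_eq_left (hpow k).le]
      rw [hev.fderiv_eq, fderiv_const_apply]
    · have hmin : IsLocalMin (φ k) x := by
        apply Filter.Eventually.of_forall
        intro y
        have hx0 : φ k x = 0 := by
          simp only [hφ]
          rw [h, sub_self, max_self, min_eq_left (hpow k).le]
        rw [hx0]
        exact le_min (le_max_right _ _) (hpow k).le
      exact hmin.fderiv_eq_zero
    · have h2 : 2 * (2:ℝ) ^ (k:ℝ) ≤ f x := by
        by_contra h2
        exact hk ⟨h, lt_of_not_ge h2⟩
      rcases eq_or_lt_of_le h2 with h3 | h3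
      · have hmax : IsLocalMax (φ k) x := by
          apply Filter.Eventually.of_forall
          intro y
          have hxc : φ k x = (2:ℝ) ^ (k:ℝ) := by
            simp only [hφ]
            rw [max_eq_left (by linarith [hpow k]), min_eq_right (by linarith [hpow k])]
          rw [hxc]
          exact min_le_right _ _
        exact hmax.fderiv_eq_zero
      · have hev : φ k =ᶠ[nhds x] fun _ => (2:ℝ) ^ (k:ℝ) := by
          filter_upwards [continuousAt_const.eventually_lt (hcont.continuousAt (x := x)) h3] with y hy
          simp only [hφ]
          rw [max_eq_left (by linarith [hpow k]), min_eq_right (by linarith [hpow k])]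
        rw [hev.fderiv_eq, fderiv_const_apply]
  have heq : ∀ k : ℤ, ((2:ℝ) ^ (k:ℝ) < f x ∧ f x < 2 * (2:ℝ) ^ (k:ℝ)) →
      fderiv ℝ (φ k) x = fderiv ℝ f x := by
    intro k ⟨h1, h2⟩
    have hev : φ k =ᶠ[nhds x] fun y => f y - (2:ℝ) ^ (k:ℝ) := by
      filter_upwards [(hcont.continuousAt (x := x)).eventually_lt continuousAt_const h2,
        continuousAt_const.eventually_lt (hcont.continuousAt (x := x)) h1] with y hy1 hy2
      simp only [hφ]
      rw [max_eq_left (by linarith), min_eq_left (by linarith)]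
    rw [hev.fderiv_eq, fderiv_sub_const]
  have key : ∀ a b : ℤ, a < b → ((2:ℝ) ^ (a:ℝ) < f x ∧ f x < 2 * (2:ℝ) ^ (a:ℝ)) →
      ((2:ℝ) ^ (b:ℝ) < f x ∧ f x < 2 * (2:ℝ) ^ (b:ℝ)) → False := by
    intro a b hab ⟨_, ha2⟩ ⟨hb1, _⟩
    have hle : 2 * (2:ℝ) ^ (a:ℝ) ≤ (2:ℝ) ^ (b:ℝ) := by
      have h4 : 2 * (2:ℝ) ^ (a:ℝ) = (2:ℝ) ^ ((a:ℝ) + 1) := by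
        rw [Real.rpow_add (by norm_num), Real.rpow_one]; ring
      rw [h4]
      apply Real.rpow_le_rpow_of_exponent_le (by norm_num)
      have h5 : (a:ℤ) + 1 ≤ b := hab
      exact_mod_cast h5
    linarith
  by_cases hex : ∃ k : ℤ, (2:ℝ) ^ (k:ℝ) < f x ∧ f x < 2 * (2:ℝ) ^ (k:ℝ)
  · obtain ⟨k₀, hk₀⟩ := hex
    have huniq : ∀ k : ℤ, k ≠ k₀ → ¬((2:ℝ) ^ (k:ℝ) < f x ∧ f x < 2 * (2:ℝ) ^ (k:ℝ)) := by
      intro k hk hcon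
      rcases lt_or_gt_of_ne hk with h | h
      · exact key k k₀ h hcon hk₀
      · exact key k₀ k h hk₀ hcon
    rw [tsum_eq_single k₀ (fun k hk => by rw [hzero k (huniq k hk)]; simp)]
    rw [heq k₀ hk₀]
  · push_neg at hex
    have hall : ∀ k : ℤ, ENNReal.ofReal (‖fderiv ℝ (φ k) x‖ ^ 2) = 0 := by
      intro k
      rw [hzero k (fun hcon => absurd hcon.2 (not_lt.mpr (hex k hcon.1)))]
      simp
    rw [tsum_congr hall]
    simp


/-- Key claim in the equivalence of log-Sobolev and Sobolev inequalities: if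
`(A/4)S + B ≥ 0` pointwise, `W(h)² = A ∫ |∇h|² dμ + ∫ ((A/4)S + B) h² dμ` and
`f_k = min (max (f − 2^k) 0) (2^k)`, then `∑_{k ∈ ℤ} W(f_k)² ≤ W(f)²`. -/
theorem tsum_W_truncation_le (n : ℕ) (μ : Measure (EuclideanSpace ℝ (Fin n)))
    (S : EuclideanSpace ℝ (Fin n) → ℝ) (hS : Measurable S)
    (A B : ℝ) (hA : 0 < A) (hB : 0 ≤ B) (hpos : ∀ x, 0 ≤ A / 4 * S x + B)
    (f : EuclideanSpace ℝ (Fin n) → ℝ) (L : NNReal) (hf : LipschitzWith L f)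
    (hf0 : ∀ x, 0 ≤ f x) :
    ∑' k : ℤ,
        (ENNReal.ofReal A * ∫⁻ x, ENNReal.ofReal
            (‖fderiv ℝ (fun y => min (max (f y - (2 : ℝ) ^ (k : ℝ)) 0) ((2 : ℝ) ^ (k : ℝ))) x‖ ^ 2) ∂μ
          + ∫⁻ x, ENNReal.ofReal ((A / 4 * S x + B) *
              (min (max (f x - (2 : ℝ) ^ (k : ℝ)) 0) ((2 : ℝ) ^ (k : ℝ))) ^ 2) ∂μ)
      ≤ ENNReal.ofReal A * (∫⁻ x, ENNReal.ofReal (‖fderiv ℝ f x‖ ^ 2) ∂μ)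
          + ∫⁻ x, ENNReal.ofReal ((A / 4 * S x + B) * f x ^ 2) ∂μ := by
  have hφc : ∀ k : ℤ, Continuous
      (fun y => min (max (f y - (2:ℝ) ^ (k:ℝ)) 0) ((2:ℝ) ^ (k:ℝ))) := fun k =>
    ((hf.continuous.sub continuous_const).max continuous_const).min continuous_const
  rw [ENNReal.tsum_add]
  apply add_le_add
  · -- gradient part
    rw [ENNReal.tsum_mul_left]
    apply mul_le_mul_right
    have hmeas : ∀ k : ℤ, AEMeasurable (fun x => ENNReal.ofReal
        (‖fderiv ℝ (fun y => min (max (f y - (2:ℝ) ^ (k:ℝ)) 0) ((2:ℝ) ^ (k:ℝ))) x‖ ^ 2)) μ :=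
      fun k => (((measurable_fderiv ℝ _).norm.pow_const 2).ennreal_ofReal).aemeasurable
    rw [← lintegral_tsum hmeas]
    exact lintegral_mono (fun x => grad_pointwise f L hf hf0 x)
  · -- potential part
    have hmeas : ∀ k : ℤ, AEMeasurable (fun x => ENNReal.ofReal ((A / 4 * S x + B) *
        (min (max (f x - (2:ℝ) ^ (k:ℝ)) 0) ((2:ℝ) ^ (k:ℝ))) ^ 2)) μ := fun k =>
      ((((hS.const_mul (A/4)).add_const B).mul
        ((hφc k).measurable.pow_const 2)).ennreal_ofReal).aemeasurable
    rw [← lintegral_tsum hmeas]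
    apply lintegral_mono
    intro x
    have hnn : ∀ k : ℤ, 0 ≤ (min (max (f x - (2:ℝ) ^ (k:ℝ)) 0) ((2:ℝ) ^ (k:ℝ))) ^ 2 :=
      fun k => sq_nonneg _
    calc ∑' k : ℤ, ENNReal.ofReal ((A / 4 * S x + B) *
            (min (max (f x - (2:ℝ) ^ (k:ℝ)) 0) ((2:ℝ) ^ (k:ℝ))) ^ 2)
        = ∑' k : ℤ, ENNReal.ofReal (A / 4 * S x + B) * ENNReal.ofReal
            ((min (max (f x - (2:ℝ) ^ (k:ℝ)) 0) ((2:ℝ) ^ (k:ℝ))) ^ 2) := by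
          refine tsum_congr fun k => ?_
          rw [ENNReal.ofReal_mul (hpos x)]
      _ = ENNReal.ofReal (A / 4 * S x + B) * ∑' k : ℤ, ENNReal.ofReal
            ((min (max (f x - (2:ℝ) ^ (k:ℝ)) 0) ((2:ℝ) ^ (k:ℝ))) ^ 2) := ENNReal.tsum_mul_left
      _ ≤ ENNReal.ofReal (A / 4 * S x + B) * ENNReal.ofReal (f x ^ 2) :=
          mul_le_mul_right (tsum_trunc_sq_le (f x) (hf0 x)) _
      _ = ENNReal.ofReal ((A / 4 * S x + B) * f x ^ 2) := (ENNReal.ofReal_mul (hpos x)).symm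
end

section
/- Let (a_k)_{k∈ℤ}, (b_k)_{k∈ℤ} be nonnegative sequences with ∑_k a_k < ∞, and suppose a_{k+1} ≤ 2^q b_k^{2θ} a_k^{2(1−θ)/s} for all k, where 0 < s < 2, q = 2n/(n−2), n ≥ 3, and 1/2 = θ/q + (1−θ)/s (so 0 < θ < 1). Then ∑_{k∈ℤ} a_k ≤ 2^{q(q−s)/(2−s)} ( ∑_{k∈ℤ} b_k² )^{q/2}. -/
/-!
Shifting the index, `∑ a_k = ∑ a_{k+1} ≤ 2^q ∑ (b_k²)^θ (a_k^{2/s})^{1-θ}`, and Hölder with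
exponents `1/θ`, `1/(1-θ)` bounds this by `2^q B^θ (∑ a_k^{2/s})^{1-θ} ≤ 2^q B^θ A^r`, where
`A = ∑ a_k`, `B = ∑ b_k²` and `r = 2(1-θ)/s`, using `2/s ≥ 1`. The balance condition on `θ` says
exactly that `1 - r = 2θ/q > 0`, so the finite quantity `A` can be absorbed:
`A ≤ (2^q B^θ)^{q/(2θ)}`.
-/

open ENNReal MeasureTheory

namespace ENNReal

variable {ι : Type*}

theorem tsum_rpow_le_rpow_tsum (f : ι → ℝ≥0∞) {p : ℝ} (hp : 1 ≤ p) :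
    ∑' i, f i ^ p ≤ (∑' i, f i) ^ p := by
  have split (x : ℝ≥0∞) : x ^ p = x * x ^ (p - 1) := by
    simpa using rpow_add_of_nonneg (x := x) 1 (p - 1) zero_le_one (sub_nonneg.2 hp)
  calc ∑' i, f i ^ p ≤ ∑' i, f i * (∑' j, f j) ^ (p - 1) :=
        ENNReal.tsum_le_tsum fun i => by
          rw [split]
          gcongr
          exact ENNReal.le_tsum i
    _ = (∑' i, f i) ^ p := by rw [ENNReal.tsum_mul_right, ← split]

theorem tsum_rpow_mul_rpow_le (f g : ι → ℝ≥0∞) {θ : ℝ} (h0 : 0 ≤ θ) (h1 : θ ≤ 1) :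
    ∑' i, f i ^ θ * g i ^ (1 - θ) ≤ (∑' i, f i) ^ θ * (∑' i, g i) ^ (1 - θ) := by
  let _ : MeasurableSpace ι := ⊤
  simpa only [lintegral_count] using lintegral_mul_norm_pow_le (μ := Measure.count)
    (measurable_from_top (f := f)).aemeasurable (measurable_from_top (f := g)).aemeasurable
    h0 (sub_nonneg.2 h1) (add_sub_cancel θ 1)

theorem tsum_rpow_mul_rpow_mul_le (f g : ι → ℝ≥0∞) {θ p : ℝ} (h0 : 0 ≤ θ) (h1 : θ ≤ 1)
    (hp : 1 ≤ p) :
    ∑' i, f i ^ θ * g i ^ (p * (1 - θ)) ≤ (∑' i, f i) ^ θ * (∑' i, g i) ^ (p * (1 - θ)) := by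
  simp_rw [rpow_mul]
  calc ∑' i, f i ^ θ * (g i ^ p) ^ (1 - θ)
      ≤ (∑' i, f i) ^ θ * (∑' i, g i ^ p) ^ (1 - θ) := tsum_rpow_mul_rpow_le f _ h0 h1
    _ ≤ (∑' i, f i) ^ θ * ((∑' i, g i) ^ p) ^ (1 - θ) := by
        gcongr
        exact tsum_rpow_le_rpow_tsum g hp

theorem le_rpow_inv_of_le_mul_rpow {A K : ℝ≥0∞} {r : ℝ} (hA : A ≠ ⊤) (hr : r < 1)
    (h : A ≤ K * A ^ r) : A ≤ K ^ (1 - r)⁻¹ := by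
  rcases eq_or_ne A 0 with rfl | hA0
  · exact zero_le
  have hpow : A ^ (1 - r) ≤ K := by
    rw [← ENNReal.mul_le_mul_iff_left (rpow_pos (pos_iff_ne_zero.2 hA0) hA).ne'
      (rpow_ne_top_of_ne_zero hA0 hA)]
    calc A ^ (1 - r) * A ^ r = A := by rw [← rpow_add _ _ hA0 hA, sub_add_cancel, rpow_one]
      _ ≤ K * A ^ r := h
  calc A = (A ^ (1 - r)) ^ (1 - r)⁻¹ := by
        rw [← rpow_mul, mul_inv_cancel₀ (sub_ne_zero.2 hr.ne'), rpow_one]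
    _ ≤ K ^ (1 - r)⁻¹ := rpow_le_rpow hpow (inv_nonneg.2 (sub_nonneg.2 hr.le))

theorem tsum_le_of_succ_le_mul_rpow_mul_rpow (x y : ℤ → ℝ≥0∞) {C : ℝ≥0∞} {θ p : ℝ}
    (hx : ∑' k, x k ≠ ⊤) (hθ0 : 0 ≤ θ) (hθ1 : θ ≤ 1) (hp : 1 ≤ p) (hr : p * (1 - θ) < 1)
    (h : ∀ k, x (k + 1) ≤ C * y k ^ θ * x k ^ (p * (1 - θ))) :
    ∑' k, x k ≤ C ^ (1 - p * (1 - θ))⁻¹ * (∑' k, y k) ^ (θ * (1 - p * (1 - θ))⁻¹) := by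
  have hinv : 0 ≤ (1 - p * (1 - θ))⁻¹ := inv_nonneg.2 (sub_nonneg.2 hr.le)
  rw [rpow_mul, ← mul_rpow_of_nonneg _ _ hinv]
  refine le_rpow_inv_of_le_mul_rpow hx hr ?_
  calc ∑' k, x k = ∑' k, x (k + 1) := ((Equiv.addRight 1).tsum_eq x).symm
    _ ≤ ∑' k, C * (y k ^ θ * x k ^ (p * (1 - θ))) :=
        ENNReal.tsum_le_tsum fun k => (h k).trans_eq (mul_assoc _ _ _)
    _ = C * ∑' k, y k ^ θ * x k ^ (p * (1 - θ)) := ENNReal.tsum_mul_left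
    _ ≤ C * ((∑' k, y k) ^ θ * (∑' k, x k) ^ (p * (1 - θ))) := by
        gcongr
        exact tsum_rpow_mul_rpow_mul_le y x hθ0 hθ1 hp
    _ = C * (∑' k, y k) ^ θ * (∑' k, x k) ^ (p * (1 - θ)) := (mul_assoc _ _ _).symm

theorem ofReal_le_of_le_mul_rpow_mul_rpow {u c y z α β : ℝ} (hc : 0 ≤ c) (hy : 0 ≤ y)
    (hz : 0 ≤ z) (hα : 0 ≤ α) (hβ : 0 ≤ β) (h : u ≤ c * y ^ α * z ^ β) :
    ENNReal.ofReal u ≤ ENNReal.ofReal c * ENNReal.ofReal y ^ α * ENNReal.ofReal z ^ β := by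
  rw [ofReal_rpow_of_nonneg hy hα, ofReal_rpow_of_nonneg hz hβ, ← ENNReal.ofReal_mul hc,
    ← ENNReal.ofReal_mul (by positivity)]
  exact ENNReal.ofReal_le_ofReal h

end ENNReal

/-- Summation/Hölder lemma closing the dyadic iteration: if the nonnegative sequences
`(a_k)`, `(b_k)` satisfy `a_{k+1} ≤ 2^q b_k^{2θ} a_k^{2(1−θ)/s}` with `0 < s < 2`,
`q = 2n/(n−2)`, `n ≥ 3`, `1/2 = θ/q + (1−θ)/s`, `0 < θ < 1`, and `∑ a_k < ∞`, then
`∑_{k∈ℤ} a_k ≤ 2^{q(q−s)/(2−s)} (∑_{k∈ℤ} b_k²)^{q/2}`. -/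
theorem dyadic_sum_closing (n : ℕ) (hn : 3 ≤ n) (q s θ : ℝ)
    (hq : q = 2 * n / (n - 2)) (hs0 : 0 < s) (hs2 : s < 2)
    (hθ0 : 0 < θ) (hθ1 : θ < 1) (hθ : 1 / 2 = θ / q + (1 - θ) / s)
    (a b : ℤ → ℝ) (ha : ∀ k, 0 ≤ a k) (hb : ∀ k, 0 ≤ b k)
    (hsum : Summable a)
    (hrec : ∀ k, a (k + 1) ≤ 2 ^ q * b k ^ (2 * θ) * a k ^ (2 * (1 - θ) / s)) :
    (∑' k : ℤ, ENNReal.ofReal (a k))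
      ≤ ENNReal.ofReal ((2 : ℝ) ^ (q * (q - s) / (2 - s))) *
          (∑' k : ℤ, ENNReal.ofReal (b k ^ 2)) ^ (q / 2) := by
  have hq0 : 0 < q := by
    have : (2 : ℝ) < n := by exact_mod_cast hn
    rw [hq]
    exact div_pos (by positivity) (by linarith)
  have hgap : 1 - 2 / s * (1 - θ) = 2 * θ / q := by
    field_simp at hθ ⊢
    linarith
  have hexp : q * (q - s) / (2 - s) = q * (2 * θ / q)⁻¹ := by
    rw [inv_div, ← mul_div_assoc, div_eq_div_iff (by linarith) (by positivity)]
    field_simp at hθ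
    linear_combination q * hθ
  have hrec' : ∀ k, ENNReal.ofReal (a (k + 1)) ≤ ENNReal.ofReal (2 ^ q) *
      ENNReal.ofReal (b k ^ 2) ^ θ * ENNReal.ofReal (a k) ^ (2 / s * (1 - θ)) := fun k => by
    refine ofReal_le_of_le_mul_rpow_mul_rpow (by positivity) (sq_nonneg _) (ha k) hθ0.le
      (by positivity) ?_
    rw [← Real.rpow_natCast, ← Real.rpow_mul (hb k), Nat.cast_ofNat, div_mul_eq_mul_div]
    exact hrec k
  have key := tsum_le_of_succ_le_mul_rpow_mul_rpow _ _
    (ENNReal.ofReal_tsum_of_nonneg ha hsum ▸ ofReal_ne_top) hθ0.le hθ1.le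
    ((one_le_div hs0).2 hs2.le) (by linarith [show 0 < 2 * θ / q by positivity]) hrec'
  have hhalf : θ * (2 * θ / q)⁻¹ = q / 2 := by field_simp
  rwa [hgap, hhalf, ofReal_rpow_of_nonneg (by positivity) (by positivity),
    ← Real.rpow_mul zero_le_two, ← hexp] at key
end

section
/- Let H : [2, ∞) × (0, T) → (0, ∞) satisfy H(pχ, σ) ≤ (4^{1+1/n} A)^{1/(pχ)} (a p + χ/(χ−1) · 1/(σ − τ))^{1/p} H(p, τ) for all p ≥ 2 and 0 < τ < σ < T, where χ = 1 + 2/n, A > 0, a ≥ 0, n ≥ 3. Fix p₀ ≥ 2 and 0 < t₀ < t₁ < T, and set p_k = p₀ χ^k, τ_k = t₀ + (1 − χ^{−k})(t₁ − t₀). If H(p, τ) is nonincreasing in τ for fixed p and H(p_k, τ_k) converges as k → ∞ to H_∞ := lim sup, then H_∞ ≤ C₀ (a p₀ + (n+2)/(2(t₁ − t₀)))^{(n+2)/(2p₀)} H(p₀, t₀), where C₀ depends only on n, A and p₀. -/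
/-
Along `p_k = p₀ χ^k` and `τ_k = t₀ + (1 - χ^{-k})(t₁ - t₀)` the gaps `τ_{k+1} - τ_k` shrink like
`χ^{-k}`, so the one-step bound reads `H(p_{k+1}, τ_{k+1}) ≤ (D χ^k)^{1/p_k} H(p_k, τ_k)` with
`D = B^{1/χ} (a p₀ + κ²/(t₁ - t₀))`, `κ = χ/(χ - 1)`. Iterating, `H(p_K, τ_K)` is bounded by a
partial product of `∏ (D χ^k)^{1/p_k} = D^{∑ 1/p_k} χ^{∑ k/p_k}`, whose exponents are convergent
geometric-type series: `∑ 1/p_k = κ/p₀` and `∑ k/p_k = κ/((χ - 1) p₀)`. Passing to the limit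
and using `κ ≥ 1` to bound `a p₀ + κ²/(t₁ - t₀) ≤ κ (a p₀ + κ/(t₁ - t₀))` gives the estimate.
-/

open Filter Topology

section GeometricExponents

variable {χ : ℝ}

theorem hasSum_inv_mul_pow (hχ : 1 < χ) (p₀ : ℝ) :
    HasSum (fun k : ℕ => (p₀ * χ ^ k)⁻¹) (χ / (χ - 1) / p₀) := by
  have hρ : χ⁻¹ < 1 := inv_lt_one_of_one_lt₀ hχ
  have hsum : χ / (χ - 1) / p₀ = p₀⁻¹ * (1 - χ⁻¹)⁻¹ := by
    have : χ - 1 ≠ 0 := by linarith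
    field_simp
  simp only [hsum, mul_inv, ← inv_pow]
  exact (hasSum_geometric_of_lt_one (by positivity) hρ).mul_left p₀⁻¹

theorem hasSum_nat_mul_inv_mul_pow (hχ : 1 < χ) (p₀ : ℝ) :
    HasSum (fun k : ℕ => k * (p₀ * χ ^ k)⁻¹) (χ / (χ - 1) ^ 2 / p₀) := by
  have hρ : ‖χ⁻¹‖ < 1 := by
    rw [Real.norm_of_nonneg (by positivity)]; exact inv_lt_one_of_one_lt₀ hχ
  have hsum : χ / (χ - 1) ^ 2 / p₀ = p₀⁻¹ * (χ⁻¹ / (1 - χ⁻¹) ^ 2) := by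
    have : χ - 1 ≠ 0 := by linarith
    field_simp
  simp only [hsum, mul_inv, ← inv_pow, mul_left_comm _ p₀⁻¹]
  exact (hasSum_coe_mul_geometric_of_norm_lt_one hρ).mul_left p₀⁻¹

theorem hasProd_rpow_inv_mul_pow (hχ : 1 < χ) {D : ℝ} (hD : 0 < D) (p₀ : ℝ) :
    HasProd (fun k : ℕ => (χ ^ k * D) ^ (p₀ * χ ^ k)⁻¹)
      (D ^ (χ / (χ - 1) / p₀) * χ ^ (χ / (χ - 1) ^ 2 / p₀)) := by
  have hχ₀ : 0 < χ := by linarith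
  have hlog := ((hasSum_inv_mul_pow hχ p₀).mul_left (Real.log D)).add
    ((hasSum_nat_mul_inv_mul_pow hχ p₀).mul_left (Real.log χ))
  convert hlog.rexp using 1
  · ext k
    rw [Function.comp_apply, Real.rpow_def_of_pos (by positivity), Real.log_mul (by positivity)
      hD.ne', Real.log_pow]
    ring_nf
  · rw [Real.exp_add, Real.rpow_def_of_pos hD, Real.rpow_def_of_pos hχ₀]

end GeometricExponents

theorem le_prod_range_mul_of_le_mul {h c : ℕ → ℝ} (hc : ∀ k, 0 ≤ c k)
    (hstep : ∀ k, h (k + 1) ≤ c k * h k) (K : ℕ) :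
    h K ≤ (∏ k ∈ Finset.range K, c k) * h 0 := by
  induction K with
  | zero => simp
  | succ K ih =>
    calc h (K + 1) ≤ c K * h K := hstep K
      _ ≤ c K * ((∏ k ∈ Finset.range K, c k) * h 0) := mul_le_mul_of_nonneg_left ih (hc K)
      _ = (∏ k ∈ Finset.range (K + 1), c k) * h 0 := by rw [Finset.prod_range_succ]; ring

theorem le_of_tendsto_of_le_rpow_mul {h : ℕ → ℝ} {χ p₀ D L : ℝ} (hχ : 1 < χ) (hD : 0 < D)
    (hstep : ∀ k : ℕ, h (k + 1) ≤ (χ ^ k * D) ^ (p₀ * χ ^ k)⁻¹ * h k)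
    (hlim : Tendsto h atTop (𝓝 L)) :
    L ≤ D ^ (χ / (χ - 1) / p₀) * χ ^ (χ / (χ - 1) ^ 2 / p₀) * h 0 := by
  have hprod := ((hasProd_rpow_inv_mul_pow hχ hD p₀).tendsto_prod_nat).mul_const (h 0)
  refine le_of_tendsto_of_tendsto' hlim hprod (le_prod_range_mul_of_le_mul (fun k => ?_) hstep)
  have : 0 < χ := by linarith
  positivity

noncomputable def moserTime (χ t₀ t₁ : ℝ) (k : ℕ) : ℝ := t₀ + (1 - (χ ^ k)⁻¹) * (t₁ - t₀)

section MoserTime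

variable {χ t₀ t₁ : ℝ}

@[simp]
theorem moserTime_zero : moserTime χ t₀ t₁ 0 = t₀ := by simp [moserTime]

theorem left_le_moserTime (hχ : 1 ≤ χ) (ht : t₀ ≤ t₁) (k : ℕ) : t₀ ≤ moserTime χ t₀ t₁ k := by
  have : (χ ^ k)⁻¹ ≤ 1 := inv_le_one_of_one_le₀ (one_le_pow₀ hχ)
  unfold moserTime; nlinarith

theorem moserTime_le_right (hχ : 0 ≤ χ) (ht : t₀ ≤ t₁) (k : ℕ) : moserTime χ t₀ t₁ k ≤ t₁ := by
  have : 0 ≤ (χ ^ k)⁻¹ := by positivity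
  unfold moserTime; nlinarith

theorem moserTime_succ_sub (hχ : χ ≠ 0) (k : ℕ) :
    moserTime χ t₀ t₁ (k + 1) - moserTime χ t₀ t₁ k = (χ - 1) / χ ^ (k + 1) * (t₁ - t₀) := by
  unfold moserTime
  field_simp
  ring

theorem moserTime_lt_moserTime_succ (hχ : 1 < χ) (ht : t₀ < t₁) (k : ℕ) :
    moserTime χ t₀ t₁ k < moserTime χ t₀ t₁ (k + 1) := by
  have := moserTime_succ_sub (t₀ := t₀) (t₁ := t₁) (by positivity : χ ≠ 0) k
  have : 0 < (χ - 1) / χ ^ (k + 1) * (t₁ - t₀) := by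
    have : 0 < χ - 1 := by linarith
    have : 0 < t₁ - t₀ := by linarith
    positivity
  linarith

theorem add_div_moserTime_succ_sub (hχ : 1 < χ) (ht : t₀ < t₁) (a p₀ : ℝ) (k : ℕ) :
    a * (p₀ * χ ^ k) + χ / (χ - 1) * (1 / (moserTime χ t₀ t₁ (k + 1) - moserTime χ t₀ t₁ k)) =
      χ ^ k * (a * p₀ + (χ / (χ - 1)) ^ 2 / (t₁ - t₀)) := by
  have : χ - 1 ≠ 0 := by linarith
  have : t₁ - t₀ ≠ 0 := by linarith
  rw [moserTime_succ_sub (by positivity) k]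
  field_simp
  ring

end MoserTime

noncomputable def moserConstant (χ B p₀ : ℝ) : ℝ :=
  B ^ (χ⁻¹ * (χ / (χ - 1) / p₀)) * χ ^ (χ / (χ - 1) ^ 2 / p₀) *
    (χ / (χ - 1)) ^ (χ / (χ - 1) / p₀)

theorem moserConstant_pos {χ B : ℝ} (hχ : 1 < χ) (hB : 0 < B) (p₀ : ℝ) :
    0 < moserConstant χ B p₀ := by
  have : 0 < χ - 1 := by linarith
  have : 0 < χ := by linarith
  unfold moserConstant
  positivity

theorem rpow_one_div_mul_mul_rpow_one_div {B X : ℝ} (hB : 0 ≤ B) (hX : 0 ≤ X) (p χ : ℝ) :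
    B ^ (1 / (p * χ)) * X ^ (1 / p) = (B ^ χ⁻¹ * X) ^ p⁻¹ := by
  rw [Real.mul_rpow (by positivity) hX, ← Real.rpow_mul hB, one_div, one_div, mul_inv, mul_comm p⁻¹]

theorem moser_iteration_of_step {χ B p₀ a t₀ t₁ L : ℝ} {H : ℝ → ℝ → ℝ}
    (hχ : 1 < χ) (hB : 0 < B) (hp₀ : 0 < p₀) (ha : 0 ≤ a) (ht : t₀ < t₁) (hH : 0 ≤ H p₀ t₀)
    (hstep : ∀ p τ σ, p₀ ≤ p → t₀ ≤ τ → τ < σ → σ ≤ t₁ →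
      H (p * χ) σ ≤ B ^ (1 / (p * χ)) * (a * p + χ / (χ - 1) * (1 / (σ - τ))) ^ (1 / p) * H p τ)
    (hlim : Tendsto (fun k : ℕ => H (p₀ * χ ^ k) (moserTime χ t₀ t₁ k)) atTop (𝓝 L)) :
    L ≤ moserConstant χ B p₀ * (a * p₀ + χ / (χ - 1) / (t₁ - t₀)) ^ (χ / (χ - 1) / p₀) *
      H p₀ t₀ := by
  set κ := χ / (χ - 1)
  set α := κ / p₀
  have hκ : 1 ≤ κ := by rw [le_div_iff₀ (by linarith)]; linarith
  have hα : 0 ≤ α := by positivity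
  have hχ₀ : 0 < χ := by linarith
  have hM : 0 ≤ a * p₀ + κ / (t₁ - t₀) := by
    have : 0 < t₁ - t₀ := by linarith
    positivity
  set F := a * p₀ + κ ^ 2 / (t₁ - t₀)
  have hF : F ≤ κ * (a * p₀ + κ / (t₁ - t₀)) := by
    have : a * p₀ ≤ κ * (a * p₀) := le_mul_of_one_le_left (by positivity) hκ
    have : κ * (κ / (t₁ - t₀)) = κ ^ 2 / (t₁ - t₀) := by ring
    linarith
  have hF₀ : 0 < F := by
    have : 0 < t₁ - t₀ := by linarith
    positivity
  have hrec : ∀ k : ℕ, H (p₀ * χ ^ (k + 1)) (moserTime χ t₀ t₁ (k + 1)) ≤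
      (χ ^ k * (B ^ χ⁻¹ * F)) ^ (p₀ * χ ^ k)⁻¹ * H (p₀ * χ ^ k) (moserTime χ t₀ t₁ k) := by
    intro k
    have h := hstep (p₀ * χ ^ k) _ _ (le_mul_of_one_le_right hp₀.le (one_le_pow₀ hχ.le))
      (left_le_moserTime hχ.le ht.le k) (moserTime_lt_moserTime_succ hχ ht k)
      (moserTime_le_right hχ₀.le ht.le (k + 1))
    rw [add_div_moserTime_succ_sub hχ ht, rpow_one_div_mul_mul_rpow_one_div hB.le
      (by positivity)] at h
    rwa [mul_assoc, ← pow_succ, mul_left_comm] at h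
  have hlimit := le_of_tendsto_of_le_rpow_mul hχ (by positivity) hrec hlim
  simp only [pow_zero, mul_one, moserTime_zero] at hlimit
  calc L ≤ (B ^ χ⁻¹ * F) ^ α * χ ^ (χ / (χ - 1) ^ 2 / p₀) * H p₀ t₀ := hlimit
    _ = B ^ (χ⁻¹ * α) * χ ^ (χ / (χ - 1) ^ 2 / p₀) * F ^ α * H p₀ t₀ := by
      rw [Real.mul_rpow (by positivity) hF₀.le, ← Real.rpow_mul hB.le]; ring
    _ ≤ B ^ (χ⁻¹ * α) * χ ^ (χ / (χ - 1) ^ 2 / p₀) * (κ * (a * p₀ + κ / (t₁ - t₀))) ^ α *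
        H p₀ t₀ := by gcongr
    _ = moserConstant χ B p₀ * (a * p₀ + κ / (t₁ - t₀)) ^ α * H p₀ t₀ := by
      rw [Real.mul_rpow (by positivity) hM, moserConstant]; ring

theorem one_add_two_div_div_sub_one {x : ℝ} (hx : x ≠ 0) :
    (1 + 2 / x) / ((1 + 2 / x) - 1) = (x + 2) / 2 := by
  field_simp
  ring

/-- Moser iteration scheme: if `H` satisfies the one-step improvement
`H(pχ, σ) ≤ (4^{1+1/n} A)^{1/(pχ)} (a p + (χ/(χ−1)) (σ−τ)⁻¹)^{1/p} H(p, τ)` with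
`χ = 1 + 2/n`, is nonincreasing in its second argument, and `H(p_k, τ_k)` converges along
`p_k = p₀ χ^k`, `τ_k = t₀ + (1 − χ^{−k})(t₁ − t₀)` to `H_∞`, then
`H_∞ ≤ C₀ (a p₀ + (n+2)/(2(t₁−t₀)))^{(n+2)/(2p₀)} H(p₀, t₀)` where `C₀` depends only on
`n`, `A`, `p₀`. -/
theorem moser_iteration (n : ℕ) (hn : 3 ≤ n) (A p₀ : ℝ) (hA : 0 < A) (hp₀ : 2 ≤ p₀) :
    ∃ C₀ : ℝ, 0 < C₀ ∧
      ∀ (T a t₀ t₁ Hinf : ℝ) (H : ℝ → ℝ → ℝ),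
        0 ≤ a → 0 < t₀ → t₀ < t₁ → t₁ < T →
        (∀ p τ, 0 < H p τ) →
        (∀ p τ σ : ℝ, 2 ≤ p → 0 < τ → τ < σ → σ < T →
          H (p * (1 + 2 / n)) σ
            ≤ ((4 : ℝ) ^ (1 + 1 / (n : ℝ)) * A) ^ (1 / (p * (1 + 2 / n))) *
                (a * p + (1 + 2 / (n : ℝ)) / ((1 + 2 / (n : ℝ)) - 1) * (1 / (σ - τ))) ^ (1 / p) *
                H p τ) →
        (∀ p τ σ : ℝ, τ ≤ σ → H p σ ≤ H p τ) →
        Tendsto (fun k : ℕ =>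
            H (p₀ * (1 + 2 / (n : ℝ)) ^ k)
              (t₀ + (1 - ((1 + 2 / (n : ℝ)) ^ k)⁻¹) * (t₁ - t₀))) atTop (nhds Hinf) →
        Hinf ≤ C₀ * (a * p₀ + ((n : ℝ) + 2) / (2 * (t₁ - t₀))) ^ (((n : ℝ) + 2) / (2 * p₀)) *
            H p₀ t₀ := by
  have hn₀ : (0 : ℝ) < n := by exact_mod_cast (show 0 < n by omega)
  have hχ : 1 < 1 + 2 / (n : ℝ) := by simp [hn₀]
  have hB : 0 < (4 : ℝ) ^ (1 + 1 / (n : ℝ)) * A := by positivity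
  refine ⟨moserConstant (1 + 2 / (n : ℝ)) ((4 : ℝ) ^ (1 + 1 / (n : ℝ)) * A) p₀,
    moserConstant_pos hχ hB p₀, ?_⟩
  intro T a t₀ t₁ Hinf H ha ht₀ ht ht₁ hH hstep _ hlim
  have key := moser_iteration_of_step hχ hB (by linarith) ha ht (hH p₀ t₀).le
    (fun p τ σ hp hτ hτσ hσ => hstep p τ σ (by linarith) (by linarith) hτσ (by linarith)) hlim
  rwa [one_add_two_div_div_sub_one hn₀.ne', div_div, div_div] at key
end
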